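/- arXiv:1507.03564 — 4 statements merged into one kernel-verified Lean document; each statement's English description precedes it below -/
import Mathlib

section
/- Let T be a finite tree with vertex set V and edge set E (so #E = #V − 1), and for each edge e ∈ E let V_e^+ and V_e^- denote the vertex sets of the two connected components of T with e removed (a labelling fixed once for each edge). Then the linear map ℝ^V → ℝ^E × ℝ sending φ to ((Σ_{v∈V_e^+} φ(v) − Σ_{v∈V_e^-} φ(v))_{e∈E}, Σ_{v∈V} φ(v)) is a linear isomorphism. In particular, for any prescribed values (a_e)_{e∈E} ∈ ℝ^E and s ∈ ℝ there is a unique φ: V → ℝ with Σ_{v∈V_e^+} φ(v) − Σ_{v∈V_e^-} φ(v) = a_e for every e ∈ E and Σ_{v∈V} φ(v) = s. -/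
namespace ThetaPaper

/-- The adjacency relation within a vertex set `S`: `a` and `b` lie in `S`
and are joined by an edge of the multigraph with edge-endpoint map `ends`. -/
def AdjOn {V E : Type} (ends : E → Sym2 V) (S : Set V) (a b : V) : Prop :=
  a ∈ S ∧ b ∈ S ∧ ∃ e, ends e = s(a, b)

/-- The induced subgraph on `S` is (nonempty and) connected. -/
def ConnectedOn {V E : Type} (ends : E → Sym2 V) (S : Set V) : Prop :=
  S.Nonempty ∧ ∀ a ∈ S, ∀ b ∈ S, Relation.ReflTransGen (AdjOn ends S) a b

/-- The multigraph is connected. -/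
def GraphConnected {V E : Type} (ends : E → Sym2 V) : Prop :=
  ConnectedOn ends Set.univ

/-- A nonempty proper subset `S` of the vertices is elementary if both the induced
subgraph on `S` and the induced subgraph on its complement are connected. -/
def Elementary {V E : Type} (ends : E → Sym2 V) (S : Set V) : Prop :=
  S.Nonempty ∧ Sᶜ.Nonempty ∧ ConnectedOn ends S ∧ ConnectedOn ends Sᶜ

/-- `cut S` is the number of edges with one endpoint in `S` and the other outside. -/
noncomputable def cut {V E : Type} (ends : E → Sym2 V) (S : Set V) : ℕ :=
  Nat.card {e : E // ∃ a b, ends e = s(a, b) ∧ a ∈ S ∧ b ∉ S}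

/-- `ℓ(S,d)(φ) = d − Σ_{v∈S} φ(v) + cut(S)/2`. -/
noncomputable def ell {V E : Type} (ends : E → Sym2 V) (S : Set V) (d : ℤ) (φ : V → ℝ) : ℝ :=
  (d : ℝ) - (∑ᶠ v ∈ S, φ v) + (cut ends S : ℝ) / 2

/-- `φ` is nondegenerate: it lies on no stability hyperplane. -/
def Nondegenerate {V E : Type} (ends : E → Sym2 V) (φ : V → ℝ) : Prop :=
  ∀ S : Set V, Elementary ends S → ∀ d : ℤ, ell ends S d φ ≠ 0

/-- The multigraph has loop-free circuit rank 0: after deleting all loops it is a tree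
(connected, with number of edges = number of vertices − 1). -/
def RankZero {V E : Type} [Fintype V] (ends : E → Sym2 V) : Prop :=
  GraphConnected (fun e : {e : E // ¬ (ends e).IsDiag} => ends e.1) ∧
  Nat.card {e : E // ¬ (ends e).IsDiag} + 1 = Fintype.card V

/-- A sheaf model of degree `g−1`: a multidegree `dd` on the vertices together with a
set `N` of nodes (where the corresponding sheaf fails to be locally free), with
`Σ dd + #N = g − 1`. -/
def IsSheafModel {V E : Type} [Fintype V] (dd : V → ℤ) (N : Set E) (g : ℤ) : Prop :=
  (∑ v, dd v) + (Nat.card N : ℤ) = g - 1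

/-- The degree of the sheaf model `(dd, N)` on the subcurve with vertex set `S`:
`Σ_{v∈S} dd v` plus the number of edges of `N` with both endpoints in `S`. -/
noncomputable def degS {V E : Type} (ends : E → Sym2 V) (dd : V → ℤ) (N : Set E)
    (S : Set V) : ℤ :=
  (∑ᶠ v ∈ S, dd v) + (Nat.card {e : E // e ∈ N ∧ ∀ v ∈ ends e, v ∈ S} : ℤ)

/-- `φ`-semistability of a sheaf model. -/
def Semistable {V E : Type} (ends : E → Sym2 V) (dd : V → ℤ) (N : Set E)
    (φ : V → ℝ) : Prop :=
  ∀ S : Set V, S.Nonempty → S ≠ Set.univ →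
    (∑ᶠ v ∈ S, φ v) - (cut ends S : ℝ) / 2 ≤ (degS ends dd N S : ℝ)

/-- `φ`-stability of a sheaf model. -/
def Stable {V E : Type} (ends : E → Sym2 V) (dd : V → ℤ) (N : Set E)
    (φ : V → ℝ) : Prop :=
  ∀ S : Set V, S.Nonempty → S ≠ Set.univ →
    (∑ᶠ v ∈ S, φ v) - (cut ends S : ℝ) / 2 < (degS ends dd N S : ℝ)

/-- The set of nondegenerate elements of the affine space `V(Γ)` (with the real
number `gr` playing the role of `g`). -/
def OmegaSet {V E : Type} [Fintype V] (ends : E → Sym2 V) (gr : ℝ) : Set (V → ℝ) :=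
  {φ | (∑ v, φ v) = gr - 1 ∧ Nondegenerate ends φ}

/-- `P` is a stability polytope of `V(Γ)`: a connected component of the complement in
`V(Γ)` of the union of all stability hyperplanes. -/
def IsStabPolytope {V E : Type} [Fintype V] (ends : E → Sym2 V) (gr : ℝ)
    (P : Set (V → ℝ)) : Prop :=
  ∃ φ0 ∈ OmegaSet ends gr, P = connectedComponentIn (OmegaSet ends gr) φ0

/-!
Write `S e` for `Vp e`, so that `Vm e = (S e)ᶜ`. As `T` has only `#V - 1` edges, `T - e` is
disconnected, so `e` is the only edge between `S e` and its complement. Hence, for each vertex `v`,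
the far sides of the edges at `v` partition `V \ {v}`: a walk from `v` leaves the side of `v` only
through an edge at `v`, and the far side of one edge at `v`, being connected without that edge,
cannot reach across another edge at `v`. So `φ v = Σ φ - Σ_{e ∋ v} Σ_{far side of e} φ`, a `φ`
with vanishing side sums is zero, and the map is injective between spaces of the same dimension
`#V = #E + 1`.
-/

variable {V E : Type} {ends : E → Sym2 V}

theorem AdjOn.mono {A B : Set V} {a b : V} (hAB : A ⊆ B) (h : AdjOn ends A a b) :
    AdjOn ends B a b :=
  ⟨hAB h.1, hAB h.2.1, h.2.2⟩

theorem ConnectedOn.union {A B : Set V} (hA : ConnectedOn ends A) (hB : ConnectedOn ends B)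
    {f : E} {x y : V} (hf : ends f = s(x, y)) (hx : x ∈ A) (hy : y ∈ B) :
    ConnectedOn ends (A ∪ B) := by
  have lift {C : Set V} (hC : C ⊆ A ∪ B) {a b : V} (h : Relation.ReflTransGen (AdjOn ends C) a b) :
      Relation.ReflTransGen (AdjOn ends (A ∪ B)) a b :=
    Relation.ReflTransGen.mono (fun _ _ => AdjOn.mono (ends := ends) hC) _ _ h
  have hxy : AdjOn ends (A ∪ B) x y := ⟨Or.inl hx, Or.inr hy, f, hf⟩
  have hyx : AdjOn ends (A ∪ B) y x := ⟨Or.inr hy, Or.inl hx, f, hf.trans Sym2.eq_swap⟩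
  refine ⟨hA.1.mono Set.subset_union_left, ?_⟩
  rintro a (ha | ha) b (hb | hb)
  · exact lift Set.subset_union_left (hA.2 a ha b hb)
  · exact ((lift Set.subset_union_left (hA.2 a ha x hx)).tail hxy).trans
      (lift Set.subset_union_right (hB.2 y hy b hb))
  · exact ((lift Set.subset_union_right (hB.2 a ha y hy)).tail hyx).trans
      (lift Set.subset_union_left (hA.2 x hx b hb))
  · exact lift Set.subset_union_right (hB.2 a ha b hb)

theorem exists_adjOn_of_reflTransGen {C A : Set V} {a b : V}
    (h : Relation.ReflTransGen (AdjOn ends C) a b) (ha : a ∈ A) (hb : b ∉ A) :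
    ∃ x y, AdjOn ends C x y ∧ x ∈ A ∧ y ∉ A := by
  induction h with
  | refl => exact absurd ha hb
  | @tail c d _ hcd ih =>
    by_cases hc : c ∈ A
    · exact ⟨c, d, hcd, hc, hb⟩
    · exact ih hc

theorem GraphConnected.card_le_card_add_one [Finite E] (h : GraphConnected ends) :
    Nat.card V ≤ Nat.card E + 1 := by
  let G := SimpleGraph.fromEdgeSet (Set.range ends)
  have : Nonempty V := h.1.to_subtype.map Subtype.val
  have hG : G.Connected := by
    refine ⟨fun a b => (SimpleGraph.reachable_iff_reflTransGen a b).2 ?_⟩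
    refine Relation.ReflTransGen.lift' id (fun c d hcd => ?_) _ _ (h.2 a trivial b trivial)
    obtain ⟨-, -, f, hf⟩ := hcd
    by_cases hcd : c = d
    · exact hcd ▸ Relation.ReflTransGen.refl
    · exact Relation.ReflTransGen.single ((SimpleGraph.fromEdgeSet_adj _).2 ⟨⟨f, hf⟩, hcd⟩)
  calc Nat.card V ≤ Nat.card G.edgeSet + 1 := hG.card_vert_le_card_edgeSet_add_one
    _ ≤ Nat.card (Set.range ends) + 1 := by
      gcongr
      exact Nat.card_mono (Set.finite_range ends)
        (SimpleGraph.edgeSet_fromEdgeSet _ ▸ Set.sdiff_subset)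
    _ ≤ Nat.card E + 1 := by gcongr; exact Finite.card_range_le ends

/-- The side of `A` or `Aᶜ` on which `v` lies. -/
def sideOf (A : Set V) (v : V) : Set V :=
  {u | u ∈ A ↔ v ∈ A}

theorem mem_sideOf_self (A : Set V) (v : V) : v ∈ sideOf A v :=
  Iff.rfl

theorem sideOf_of_mem {A : Set V} {v : V} (hv : v ∈ A) : sideOf A v = A := by
  ext u; simp [sideOf, hv]

theorem sideOf_of_notMem {A : Set V} {v : V} (hv : v ∉ A) : sideOf A v = Aᶜ := by
  ext u; simp [sideOf, hv]

/-- `S e` is one of the two components of `T` minus `e`, for every edge `e` of the tree `T`. -/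
structure TreeCuts [Fintype V] [Fintype E] (ends : E → Sym2 V) (S : E → Set V) : Prop where
  connected : GraphConnected ends
  card_add_one : Fintype.card E + 1 = Fintype.card V
  connectedOn : ∀ e, ConnectedOn (fun e' : {e' : E // e' ≠ e} => ends e'.1) (S e)
  connectedOn_compl : ∀ e, ConnectedOn (fun e' : {e' : E // e' ≠ e} => ends e'.1) (S e)ᶜ

namespace TreeCuts

variable [Fintype V] [Fintype E] {S : E → Set V}

theorem not_graphConnected_delete (h : TreeCuts ends S) (e : E) :
    ¬ GraphConnected (fun e' : {e' : E // e' ≠ e} => ends e'.1) := by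
  classical
  intro hconn
  have hle := hconn.card_le_card_add_one
  have hcard := h.card_add_one
  rw [Nat.card_eq_fintype_card, Nat.card_eq_fintype_card,
    Fintype.card_subtype_compl, Fintype.card_subtype_eq] at hle
  have : 0 < Fintype.card E := Fintype.card_pos_iff.2 ⟨e⟩
  omega

theorem eq_of_not_iff (h : TreeCuts ends S) {e f : E} {x y : V} (hf : ends f = s(x, y))
    (hxy : ¬ (x ∈ S e ↔ y ∈ S e)) : f = e := by
  by_contra hfe
  apply h.not_graphConnected_delete e
  have hf' : (fun e' : {e' : E // e' ≠ e} => ends e'.1) ⟨f, hfe⟩ = s(x, y) := hf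
  rw [GraphConnected, ← Set.union_compl_self (S e)]
  by_cases hx : x ∈ S e
  · have hy : y ∈ (S e)ᶜ := fun hy => hxy ⟨fun _ => hy, fun _ => hx⟩
    exact (h.connectedOn e).union (h.connectedOn_compl e) hf' hx hy
  · have hy : y ∈ S e := by tauto
    exact (h.connectedOn e).union (h.connectedOn_compl e) (hf'.trans Sym2.eq_swap) hy hx

theorem eq_of_mem_sideOf (h : TreeCuts ends S) {e f : E} {v x y : V} (hf : ends f = s(x, y))
    (hx : x ∈ sideOf (S e) v) (hy : y ∉ sideOf (S e) v) : f = e :=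
  h.eq_of_not_iff hf fun hxy => hy (hxy.symm.trans hx)

theorem not_iff_of_ends_eq (h : TreeCuts ends S) {e : E} {x y : V} (he : ends e = s(x, y)) :
    ¬ (x ∈ S e ↔ y ∈ S e) := by
  obtain ⟨a, ha⟩ := (h.connectedOn e).1
  obtain ⟨b, hb⟩ := (h.connectedOn_compl e).1
  obtain ⟨c, d, ⟨-, -, f, hf⟩, hc, hd⟩ :=
    exists_adjOn_of_reflTransGen (h.connected.2 a trivial b trivial) ha hb
  rw [h.eq_of_not_iff hf (by tauto), he] at hf
  rcases Sym2.eq_iff.1 hf with ⟨rfl, rfl⟩ | ⟨rfl, rfl⟩ <;> tauto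

theorem connectedOn_compl_sideOf (h : TreeCuts ends S) (e : E) (v : V) :
    ConnectedOn (fun e' : {e' : E // e' ≠ e} => ends e'.1) (sideOf (S e) v)ᶜ := by
  by_cases hv : v ∈ S e
  · rw [sideOf_of_mem hv]; exact h.connectedOn_compl e
  · rw [sideOf_of_notMem hv, compl_compl]; exact h.connectedOn e

theorem exists_mem_ends_notMem_sideOf (h : TreeCuts ends S) {u v : V} (huv : u ≠ v) :
    ∃ e, v ∈ ends e ∧ u ∉ sideOf (S e) v := by
  suffices ∀ w, Relation.ReflTransGen (AdjOn ends Set.univ) v w →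
      w = v ∨ ∃ e, v ∈ ends e ∧ w ∉ sideOf (S e) v from
    (this u (h.connected.2 v trivial u trivial)).resolve_left huv
  intro w hw
  induction hw with
  | refl => exact Or.inl rfl
  | @tail c d _ hcd ih =>
    obtain ⟨-, -, g, hg⟩ := hcd
    rcases ih with rfl | ⟨e, hve, hc⟩
    · exact Or.inr ⟨g, hg ▸ Sym2.mem_mk_left c d, fun hd => h.not_iff_of_ends_eq hg hd.symm⟩
    by_cases hd : d ∈ sideOf (S e) v
    · have hge := h.eq_of_mem_sideOf (hg.trans Sym2.eq_swap) hd hc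
      rw [hge] at hg
      rcases Sym2.mem_iff.1 (hg ▸ hve) with rfl | rfl
      · exact absurd (mem_sideOf_self _ _) hc
      · exact Or.inl rfl
    · exact Or.inr ⟨e, hve, hd⟩

theorem compl_singleton_eq_biUnion (h : TreeCuts ends S) (v : V) :
    ({v}ᶜ : Set V) = ⋃ e ∈ {e | v ∈ ends e}, (sideOf (S e) v)ᶜ := by
  ext u
  simp only [Set.mem_compl_iff, Set.mem_singleton_iff, Set.mem_iUnion, Set.mem_ofPred_eq,
    exists_prop]
  refine ⟨h.exists_mem_ends_notMem_sideOf, ?_⟩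
  rintro ⟨e, -, hu⟩ rfl
  exact hu (mem_sideOf_self _ _)

theorem pairwiseDisjoint_compl_sideOf (h : TreeCuts ends S) (v : V) :
    {e | v ∈ ends e}.PairwiseDisjoint (fun e => (sideOf (S e) v)ᶜ) := by
  intro e₁ hv₁ e₂ hv₂ hne
  refine Set.disjoint_left.2 fun u hu₁ hu₂ => ?_
  obtain ⟨a, ha⟩ := Sym2.mem_iff_exists.1 hv₁
  obtain ⟨b, hb⟩ := Sym2.mem_iff_exists.1 hv₂
  have ha₁ : a ∉ sideOf (S e₁) v := fun ha' => h.not_iff_of_ends_eq ha ha'.symm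
  have ha₂ : a ∈ sideOf (S e₂) v := by
    by_contra ha₂
    exact hne (h.eq_of_mem_sideOf ha (mem_sideOf_self _ _) ha₂)
  -- a walk from `a` to `u` inside the far side of `e₁` must cross `e₂`, which contains `v`
  obtain ⟨x, y, ⟨hx, hy, ⟨f, hf⟩, hfe⟩, hx₂, hy₂⟩ := exists_adjOn_of_reflTransGen
    ((h.connectedOn_compl_sideOf e₁ v).2 a ha₁ u hu₁) ha₂ hu₂
  have hf₂ : ends f = s(x, y) := hfe
  rw [h.eq_of_mem_sideOf hf₂ hx₂ hy₂, hb] at hf₂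
  rcases Sym2.eq_iff.1 hf₂ with ⟨rfl, -⟩ | ⟨rfl, -⟩
  · exact hx (mem_sideOf_self _ _)
  · exact hy (mem_sideOf_self _ _)

theorem eq_zero_of_finsum_eq_zero {M : Type*} [AddCommMonoid M] (h : TreeCuts ends S)
    {φ : V → M} (hS : ∀ e, ∑ᶠ u ∈ S e, φ u = 0) (hSc : ∀ e, ∑ᶠ u ∈ (S e)ᶜ, φ u = 0)
    (htotal : ∑ u, φ u = 0) : φ = 0 := by
  funext v
  have hfar : ∀ e, ∑ᶠ u ∈ (sideOf (S e) v)ᶜ, φ u = 0 := fun e => by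
    by_cases hv : v ∈ S e
    · rw [sideOf_of_mem hv, hSc]
    · rw [sideOf_of_notMem hv, compl_compl, hS]
  have hrest : ∑ᶠ u ∈ ({v}ᶜ : Set V), φ u = 0 := by
    rw [h.compl_singleton_eq_biUnion v, finsum_mem_biUnion (h.pairwiseDisjoint_compl_sideOf v)
      (Set.toFinite _) fun _ _ => Set.toFinite _]
    simp only [hfar, finsum_zero]
  have huniv : (Set.univ : Set V) = insert v {v}ᶜ := Set.ext fun u => by simp [eq_or_ne u v]
  rwa [← finsum_eq_sum_of_fintype, ← finsum_mem_univ, huniv,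
    finsum_mem_insert _ (by simp) (Set.toFinite _), hrest, add_zero]
    at htotal

end TreeCuts

noncomputable def sideSums [Fintype V] (K : Type*) [Field K] (S : E → Set V) :
    (V → K) →ₗ[K] (E → K) × K where
  toFun φ := (fun e => (∑ᶠ v ∈ S e, φ v) - ∑ᶠ v ∈ (S e)ᶜ, φ v, ∑ v, φ v)
  map_add' φ ψ := by
    ext e <;> simp only [Pi.add_apply, Prod.fst_add, Prod.snd_add,
      finsum_mem_add_distrib (Set.toFinite _), Finset.sum_add_distrib]
    ring
  map_smul' c φ := by
    ext e <;> simp only [Pi.smul_apply, smul_eq_mul, Prod.smul_fst, Prod.smul_snd,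
      RingHom.id_apply, ← mul_finsum_mem, ← Finset.mul_sum]
    ring

@[simp]
theorem sideSums_apply [Fintype V] (K : Type*) [Field K] (S : E → Set V) (φ : V → K) :
    sideSums K S φ = (fun e => (∑ᶠ v ∈ S e, φ v) - ∑ᶠ v ∈ (S e)ᶜ, φ v, ∑ v, φ v) :=
  rfl

theorem TreeCuts.bijective_sideSums [Fintype V] [Fintype E] {S : E → Set V}
    (K : Type*) [Field K] [NeZero (2 : K)] (h : TreeCuts ends S) :
    Function.Bijective (sideSums K S) := by
  have hinj : Function.Injective (sideSums K S) := by
    rw [← LinearMap.ker_eq_bot, LinearMap.ker_eq_bot']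
    intro φ hφ
    have hdiff e : (∑ᶠ v ∈ S e, φ v) - ∑ᶠ v ∈ (S e)ᶜ, φ v = 0 :=
      congr_fun (congr_arg Prod.fst hφ) e
    have htotal : ∑ v, φ v = 0 := congr_arg Prod.snd hφ
    have hsplit e : (∑ᶠ v ∈ S e, φ v) + ∑ᶠ v ∈ (S e)ᶜ, φ v = 0 := by
      rw [← finsum_mem_union disjoint_compl_right (Set.toFinite _) (Set.toFinite _),
        Set.union_compl_self, finsum_mem_univ, finsum_eq_sum_of_fintype, htotal]
    refine h.eq_zero_of_finsum_eq_zero (fun e => ?_) (fun e => ?_) htotal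
    · have : (2 : K) * ∑ᶠ v ∈ S e, φ v = 0 := by linear_combination hsplit e + hdiff e
      exact (mul_eq_zero.1 this).resolve_left two_ne_zero
    · have : (2 : K) * ∑ᶠ v ∈ (S e)ᶜ, φ v = 0 := by linear_combination hsplit e - hdiff e
      exact (mul_eq_zero.1 this).resolve_left two_ne_zero
  have hdim : Module.finrank K (V → K) = Module.finrank K ((E → K) × K) := by
    simp [Module.finrank_prod, h.card_add_one]
  exact ⟨hinj, (LinearMap.injective_iff_surjective_of_finrank_eq_finrank hdim).1 hinj⟩

theorem statement0_general (V E : Type) [Fintype V] [Fintype E] (ends : E → Sym2 V)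
    (hconn : GraphConnected ends)
    (hcard : Fintype.card E + 1 = Fintype.card V)
    (Vp Vm : E → Set V)
    (hdisj : ∀ e, Vp e ∩ Vm e = ∅)
    (hunion : ∀ e, Vp e ∪ Vm e = Set.univ)
    (hVp : ∀ e, ConnectedOn (fun e' : {e' : E // e' ≠ e} => ends e'.1) (Vp e))
    (hVm : ∀ e, ConnectedOn (fun e' : {e' : E // e' ≠ e} => ends e'.1) (Vm e)) :
    Function.Bijective
      (fun φ : V → ℝ =>
        ((fun e => (∑ᶠ v ∈ Vp e, φ v) - ∑ᶠ v ∈ Vm e, φ v, ∑ v, φ v) :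
          (E → ℝ) × ℝ)) ∧
    ∀ (a : E → ℝ) (s : ℝ), ∃! φ : V → ℝ,
      (∀ e, (∑ᶠ v ∈ Vp e, φ v) - (∑ᶠ v ∈ Vm e, φ v) = a e) ∧ (∑ v, φ v) = s := by
  obtain rfl : Vm = fun e => (Vp e)ᶜ :=
    funext fun e => (IsCompl.of_eq (hdisj e) (hunion e)).compl_eq.symm
  have hbij := (TreeCuts.mk hconn hcard hVp hVm).bijective_sideSums ℝ
  refine ⟨hbij, fun a s => ?_⟩
  simpa [Prod.ext_iff, funext_iff] using hbij.existsUnique (a, s)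

/-- Let `T` be a finite tree (a connected loop-free multigraph with
`#E + 1 = #V`), and for each edge `e` let `Vp e` and `Vm e` be the vertex sets of the
two connected components of `T` with `e` removed (a labelling fixed once for each
edge; these are characterized as a partition of the vertex set into two subsets, each
connected in `T − e`).  Then the linear map `ℝ^V → ℝ^E × ℝ` sending `φ` to
`((Σ_{v ∈ Vp e} φ v − Σ_{v ∈ Vm e} φ v)_e, Σ_v φ v)` is a linear isomorphism;
in particular, for any prescribed `(a, s)` there is a unique `φ` with the prescribed
differences and total sum. -/
theorem statement0 (V E : Type) [Fintype V] [Fintype E] (ends : E → Sym2 V)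
    (hconn : GraphConnected ends)
    (hloopfree : ∀ e, ¬ (ends e).IsDiag)
    (hcard : Fintype.card E + 1 = Fintype.card V)
    (Vp Vm : E → Set V)
    (hdisj : ∀ e, Vp e ∩ Vm e = ∅)
    (hunion : ∀ e, Vp e ∪ Vm e = Set.univ)
    (hVp : ∀ e, ConnectedOn (fun e' : {e' : E // e' ≠ e} => ends e'.1) (Vp e))
    (hVm : ∀ e, ConnectedOn (fun e' : {e' : E // e' ≠ e} => ends e'.1) (Vm e)) :
    Function.Bijective
      (fun φ : V → ℝ =>
        ((fun e => (∑ᶠ v ∈ Vp e, φ v) - ∑ᶠ v ∈ Vm e, φ v, ∑ v, φ v) :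
          (E → ℝ) × ℝ)) ∧
    ∀ (a : E → ℝ) (s : ℝ), ∃! φ : V → ℝ,
      (∀ e, (∑ᶠ v ∈ Vp e, φ v) - (∑ᶠ v ∈ Vm e, φ v) = a e) ∧ (∑ v, φ v) = s :=
  statement0_general V E ends hconn hcard Vp Vm hdisj hunion hVp hVm

end ThetaPaper
end

section
/- Let Γ be a multigraph of loop-free circuit rank 0 with vertex set V, g an integer, and let φ ∈ V(Γ) be nondegenerate. Then there exists a function d: V → ℤ with Σ_{v∈V} d(v) = g−1 such that |Σ_{v∈S} d(v) − Σ_{v∈S} φ(v)| < cut(S)/2 for every nonempty proper subset S ⊊ V (that is, a φ-stable multidegree of a line bundle exists); moreover, any two such functions d are equal. -/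
/-!
Deleting the loops leaves a tree `T` without parallel edges, so each edge `ab` of `T` splits the
vertices into two connected sides, each with `cut = 1`. Stability on the side of `b` forces the
degree there to be the integer nearest to the `φ`-mass of that side, and nondegeneracy keeps this
mass off `ℤ + 1/2`. The sides at a vertex `v` partition `V ∖ {v}`, so this pins down `d v`.
Conversely, for the `d` so defined, `d(S) - φ(S)` telescopes to the sum of the rounding errors
over the edges of `T` leaving `S`: fewer than `cut(S)` halves.
-/

open Finset
open scoped Classical

section Round

variable {α : Type*} [Field α] [LinearOrder α] [IsStrictOrderedRing α] [FloorRing α]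

theorem round_eq_of_abs_sub_lt_half {x : α} {n : ℤ} (h : |x - n| < 1 / 2) : round x = n := by
  rw [round_eq_iff]
  constructor <;> linarith [abs_lt.mp h]

theorem abs_sub_round_lt_half {x : α} (hx : ∀ n : ℤ, x ≠ n + 1 / 2) :
    |x - round x| < 1 / 2 := by
  refine (abs_sub_round x).lt_of_ne fun h => ?_
  rcases (abs_eq (by norm_num)).mp h with h | h
  · exact hx (round x) (by linarith)
  · exact hx (round x - 1) (by push_cast; linarith)

theorem round_intCast_sub {x : α} (n : ℤ) (hx : |x - round x| < 1 / 2) :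
    round (n - x) = n - round x :=
  round_eq_of_abs_sub_lt_half (by rw [← abs_neg]; push_cast; convert hx using 2; ring)

end Round

theorem finsum_mem_eq_sum_ite {α M : Type*} [Fintype α] [AddCommMonoid M] (s : Set α)
    (f : α → M) : ∑ᶠ i ∈ s, f i = ∑ i, if i ∈ s then f i else 0 := by
  rw [finsum_mem_eq_toFinset_sum, ← sum_filter]
  congr 1
  ext
  simp

theorem Int.cast_finsum_mem {ι M : Type*} [AddCommGroupWithOne M] {s : Set ι} (hs : s.Finite)
    (f : ι → ℤ) : ((∑ᶠ i ∈ s, f i : ℤ) : M) = ∑ᶠ i ∈ s, (f i : M) :=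
  (Int.castAddHom M).map_finsum_mem _ hs

namespace SimpleGraph

variable {V : Type*} {G : SimpleGraph V} {a b v w : V}

variable (G) in
def side (a b : V) : Set V := {v | (G.deleteEdges {s(a, b)}).Reachable b v}

theorem mem_side_self : b ∈ G.side a b := Reachable.refl _

theorem mem_side_iff_exists_walk : v ∈ G.side a b ↔ ∃ p : G.Walk b v, s(a, b) ∉ p.edges :=
  reachable_deleteEdges_iff_exists_walk

theorem IsAcyclic.notMem_side (hG : G.IsAcyclic) (hab : G.Adj a b) : a ∉ G.side a b :=
  fun h => isBridge_iff.mp (isAcyclic_iff_forall_adj_isBridge.mp hG hab) h.symm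

theorem IsAcyclic.notMem_side_of_mem_side (hG : G.IsAcyclic) (hab : G.Adj a b)
    (hv : v ∈ G.side a b) : v ∉ G.side b a := by
  intro hv'
  rw [side, Sym2.eq_swap] at hv'
  exact hG.notMem_side hab (hv.trans hv'.symm)

theorem Preconnected.mem_side_or_mem_side (hG : G.Preconnected) (hab : G.Adj a b) (v : V) :
    v ∈ G.side a b ∨ v ∈ G.side b a := by
  obtain ⟨P, hP⟩ := (hG v a).some.toPath
  by_cases haP : s(a, b) ∈ P.edges
  · have hbP := P.snd_mem_support_of_mem_edges haP
    have ha := Walk.endpoint_notMem_support_takeUntil hP hbP hab.ne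
    refine .inl (mem_side_iff_exists_walk.mpr ⟨(P.takeUntil b hbP).reverse, fun h => ha ?_⟩)
    rw [Walk.edges_reverse, List.mem_reverse] at h
    exact Walk.fst_mem_support_of_mem_edges _ h
  · refine .inr (mem_side_iff_exists_walk.mpr ⟨P.reverse, ?_⟩)
    rwa [Walk.edges_reverse, List.mem_reverse, Sym2.eq_swap]

theorem IsTree.compl_side (hG : G.IsTree) (hab : G.Adj a b) : (G.side a b)ᶜ = G.side b a :=
  Set.ext fun v => ⟨(hG.connected.preconnected.mem_side_or_mem_side hab v).resolve_left,
    fun h h' => hG.isAcyclic.notMem_side_of_mem_side hab h' h⟩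

theorem IsTree.existsUnique_side (hG : G.IsTree) (hwv : w ≠ v) :
    ∃! b, G.Adj v b ∧ w ∈ G.side v b := by
  obtain ⟨p, hp⟩ := (hG.existsUnique_path v w).exists
  cases p with
  | nil => exact absurd rfl hwv
  | @cons _ u _ hvu q =>
    rw [Walk.cons_isPath_iff] at hp
    have hq : ∀ x, s(v, x) ∉ q.edges := fun x h => hp.2 (q.fst_mem_support_of_mem_edges h)
    refine ⟨u, ⟨hvu, mem_side_iff_exists_walk.mpr ⟨q, hq u⟩⟩, ?_⟩
    rintro x ⟨hvx, hwx⟩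
    by_contra hxu
    have hwv : (G.deleteEdges {s(v, x)}).Reachable w v :=
      reachable_deleteEdges_iff_exists_walk.mpr ⟨(Walk.cons hvu q).reverse, by
        simp [Walk.edges_reverse, hq x, hxu, hvx.ne']⟩
    exact hG.isAcyclic.notMem_side hvx (hwx.trans hwv)

section Finite

variable [Fintype V]

theorem IsTree.sum_sum_side_add {M : Type*} [AddCommMonoid M] (hG : G.IsTree)
    (v : V) (f : V → M) :
    ∑ b ∈ G.neighborFinset v, ∑ᶠ w ∈ G.side v b, f w + f v = ∑ w, f w := by
  have hfiber : ∀ w, ∑ b ∈ G.neighborFinset v, (if w ∈ G.side v b then f w else 0)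
      = if w ≠ v then f w else 0 := by
    intro w
    split_ifs with hwv
    · obtain ⟨b, ⟨hvb, hwb⟩, huniq⟩ := hG.existsUnique_side hwv
      rw [sum_eq_single_of_mem b (mem_neighborFinset _ _ _ |>.mpr hvb), if_pos hwb]
      intro c hc hcb
      exact if_neg fun hwc => hcb (huniq c ⟨(mem_neighborFinset _ _ _).mp hc, hwc⟩)
    · obtain rfl := not_not.mp hwv
      exact sum_eq_zero fun b hb =>
        if_neg (hG.isAcyclic.notMem_side ((mem_neighborFinset _ _ _).mp hb))
  simp_rw [finsum_mem_eq_sum_ite]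
  rw [sum_comm, sum_congr rfl fun w _ => hfiber w, ← sum_filter, filter_ne',
    sum_erase_add _ _ (mem_univ v)]

theorem IsTree.finsum_side_add_finsum_side {M : Type*} [AddCommMonoid M] (hG : G.IsTree)
    (hab : G.Adj a b) (f : V → M) :
    ∑ᶠ v ∈ G.side a b, f v + ∑ᶠ v ∈ G.side b a, f v = ∑ v, f v := by
  rw [← hG.compl_side hab, ← finsum_mem_union disjoint_compl_right (Set.toFinite _)
    (Set.toFinite _), Set.union_compl_self, finsum_mem_univ, finsum_eq_sum_of_fintype]

variable (G) in
noncomputable def edgeBoundary (S : Set V) : Finset (V × V) :=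
  {p | G.Adj p.1 p.2 ∧ p.1 ∈ S ∧ p.2 ∉ S}

@[simp]
theorem mem_edgeBoundary {S : Set V} {p : V × V} :
    p ∈ G.edgeBoundary S ↔ G.Adj p.1 p.2 ∧ p.1 ∈ S ∧ p.2 ∉ S := by
  simp [edgeBoundary]

theorem Preconnected.edgeBoundary_nonempty (hG : G.Preconnected) {S : Set V} (hS : S.Nonempty)
    (hS' : S ≠ Set.univ) : (G.edgeBoundary S).Nonempty := by
  obtain ⟨u, hu⟩ := hS
  obtain ⟨w, hw⟩ := Set.ne_univ_iff_exists_notMem S |>.mp hS'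
  obtain ⟨d, -, hd₁, hd₂⟩ := (hG u w).some.exists_boundary_dart S hu hw
  exact ⟨d.toProd, mem_edgeBoundary.mpr ⟨d.adj, hd₁, hd₂⟩⟩

theorem IsTree.edgeBoundary_side (hG : G.IsTree) (hab : G.Adj a b) :
    G.edgeBoundary (G.side a b) = {(b, a)} := by
  ext ⟨x, y⟩
  simp only [mem_edgeBoundary, mem_singleton, Prod.mk.injEq]
  constructor
  · rintro ⟨hxy, hx, hy⟩
    by_contra hne
    have hxy' : s(x, y) ≠ s(a, b) := by
      intro h
      rcases Sym2.eq_iff.mp h with ⟨rfl, -⟩ | ⟨rfl, rfl⟩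
      · exact hG.isAcyclic.notMem_side hab hx
      · exact hne ⟨rfl, rfl⟩
    exact hy (hx.trans (deleteEdges_adj.mpr ⟨hxy, hxy'⟩).reachable)
  · rintro ⟨rfl, rfl⟩
    exact ⟨hab.symm, mem_side_self, hG.isAcyclic.notMem_side hab⟩

theorem sum_sum_neighborFinset_eq_sum_edgeBoundary {M : Type*} [AddCommGroup M]
    (t : V → V → M) (ht : ∀ a b, G.Adj a b → t a b + t b a = 0) (S : Set V) :
    ∑ᶠ w ∈ S, ∑ b ∈ G.neighborFinset w, t w b
      = ∑ p ∈ G.edgeBoundary S, t p.1 p.2 := by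
  have hdarts : ∑ᶠ w ∈ S, ∑ b ∈ G.neighborFinset w, t w b
      = ∑ p : V × V with G.Adj p.1 p.2 ∧ p.1 ∈ S, t p.1 p.2 := by
    rw [finsum_mem_eq_sum_ite, sum_filter, Fintype.sum_prod_type]
    refine sum_congr rfl fun w _ => ?_
    split_ifs with hw <;> simp [hw, neighborFinset_eq_filter, sum_filter]
  -- darts with both ends in `S` cancel against their reversals
  have hinner : ∑ p ∈ ({p : V × V | G.Adj p.1 p.2 ∧ p.1 ∈ S} : Finset _) with p.2 ∈ S,
      t p.1 p.2 = 0 := by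
    refine sum_involution (fun p _ => p.swap) (fun p hp => ?_) (fun p hp _ h => ?_)
      (fun p hp => ?_) fun _ _ => rfl
    all_goals simp only [mem_filter, mem_univ, true_and] at hp
    · exact ht _ _ hp.1.1
    · exact hp.1.1.ne (congrArg Prod.fst h).symm
    · simpa using ⟨⟨hp.1.1.symm, hp.2⟩, hp.1.2⟩
  rw [hdarts, ← sum_filter_add_sum_filter_not _ (fun p => p.2 ∈ S), hinner, zero_add,
    filter_filter]
  congr 1
  ext
  simp [and_assoc]

end Finite

end SimpleGraph

namespace ThetaPaper

open SimpleGraph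

variable {V E : Type} {ends : E → Sym2 V} {a b : V}

variable (ends) in
def skeleton : SimpleGraph V := fromEdgeSet (Set.range ends)

theorem skeleton_adj : (skeleton ends).Adj a b ↔ (∃ e, ends e = s(a, b)) ∧ a ≠ b := by
  simp [skeleton]

theorem RankZero.connected_skeleton [Fintype V] (h : RankZero ends) :
    (skeleton ends).Connected := by
  obtain ⟨⟨⟨v, -⟩, hreach⟩, -⟩ := h
  have : Nonempty V := ⟨v⟩
  refine ⟨fun x y => ?_⟩
  rw [skeleton, reachable_fromEdgeSet_eq_reflTransGen_toRel]
  exact Relation.ReflTransGen.mono (fun _ _ ⟨_, _, e, he⟩ => ⟨e.1, he⟩) _ _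
    (hreach x trivial y trivial)

theorem RankZero.finite_nonLoop [Fintype V] (h : RankZero ends) :
    Finite {e // ¬ (ends e).IsDiag} := by
  by_contra hinf
  rw [not_finite_iff_infinite] at hinf
  have hV := h.2
  -- `Nat.card` of an infinite type is `0`, which would leave a single vertex and no non-loop edge.
  rw [Nat.card_eq_zero_of_infinite, zero_add] at hV
  have : Subsingleton V := Fintype.card_le_one_iff_subsingleton.mp hV.ge
  obtain ⟨e, he⟩ := Infinite.nonempty {e // ¬ (ends e).IsDiag}
  induction hz : ends e using Sym2.ind with
  | _ x y => exact he (hz ▸ Sym2.mk_isDiag_iff.mpr (Subsingleton.elim x y))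

theorem RankZero.isTree_skeleton_and_injOn [Fintype V] (h : RankZero ends) :
    (skeleton ends).IsTree ∧ Set.InjOn ends {e | ¬ (ends e).IsDiag} := by
  let f : {e // ¬ (ends e).IsDiag} → (skeleton ends).edgeSet :=
    fun e => ⟨ends e, by simp [skeleton, edgeSet_fromEdgeSet, e.2]⟩
  have hf : Function.Surjective f := by
    rintro ⟨z, hz⟩
    rw [skeleton, edgeSet_fromEdgeSet] at hz
    obtain ⟨⟨e, rfl⟩, hd⟩ := hz
    exact ⟨⟨e, hd⟩, rfl⟩
  have hconn := h.connected_skeleton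
  have := h.finite_nonLoop
  have hcard : Nat.card {e // ¬ (ends e).IsDiag} ≤ Nat.card (skeleton ends).edgeSet := by
    have := hconn.card_vert_le_card_edgeSet_add_one
    rw [Nat.card_eq_fintype_card, ← h.2] at this
    omega
  have hbij := hf.bijective_of_nat_card_le hcard
  refine ⟨isTree_iff_connected_and_card.mpr ⟨hconn, ?_⟩, fun e he e' he' hee => ?_⟩
  · rw [← Nat.card_eq_of_bijective f hbij, h.2, Nat.card_eq_fintype_card]
  · exact congrArg Subtype.val (hbij.1 (Subtype.ext hee : f ⟨e, he⟩ = f ⟨e', he'⟩))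

theorem cut_eq_card_edgeBoundary [Fintype V] (hinj : Set.InjOn ends {e | ¬ (ends e).IsDiag})
    (S : Set V) : cut ends S = ((skeleton ends).edgeBoundary S).card := by
  have hex : ∀ p ∈ (skeleton ends).edgeBoundary S, ∃ e, ends e = s(p.1, p.2) :=
    fun p hp => (skeleton_adj.mp (mem_edgeBoundary.mp hp).1).1
  choose e he using hex
  rw [cut, ← Nat.card_eq_finsetCard]
  symm
  refine Nat.card_eq_of_bijective (fun p => ⟨e p.1 p.2, p.1.1, p.1.2, he _ _,
    (mem_edgeBoundary.mp p.2).2.1, (mem_edgeBoundary.mp p.2).2.2⟩) ⟨?_, ?_⟩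
  · rintro ⟨⟨x, y⟩, hp⟩ ⟨⟨x', y'⟩, hq⟩ hpq
    have hends := (he _ hp).symm.trans ((congrArg (fun c => ends c.1) hpq).trans (he _ hq))
    rw [mem_edgeBoundary] at hp hq
    rcases Sym2.eq_iff.mp hends with ⟨rfl, rfl⟩ | ⟨rfl, rfl⟩
    · rfl
    · exact absurd hp.2.1 hq.2.2
  · rintro ⟨e', x, y, hxy, hx, hy⟩
    have hne : x ≠ y := fun h => hy (h ▸ hx)
    have hp : (x, y) ∈ (skeleton ends).edgeBoundary S :=
      mem_edgeBoundary.mpr ⟨skeleton_adj.mpr ⟨⟨e', hxy⟩, hne⟩, hx, hy⟩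
    have hloop : ∀ e'', ends e'' = s(x, y) → ¬ (ends e'').IsDiag := fun e'' h => by simpa [h]
    exact ⟨⟨(x, y), hp⟩,
      Subtype.ext (hinj (hloop _ (he _ hp)) (hloop _ hxy) ((he _ hp).trans hxy.symm))⟩

theorem AdjOn.symm {S : Set V} (h : AdjOn ends S a b) : AdjOn ends S b a :=
  ⟨h.2.1, h.1, h.2.2.imp fun _ he => he.trans Sym2.eq_swap⟩

theorem connectedOn_side : ConnectedOn ends ((skeleton ends).side a b) := by
  have hfrom : ∀ v ∈ (skeleton ends).side a b,
      Relation.ReflTransGen (AdjOn ends ((skeleton ends).side a b)) b v := by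
    intro v hv
    induction (reachable_iff_reflTransGen _ _).mp hv with
    | refl => exact .refl
    | @tail u w hbu huw ih =>
      have hu : u ∈ (skeleton ends).side a b := (reachable_iff_reflTransGen _ _).mpr hbu
      exact (ih hu).tail
        ⟨hu, hu.trans huw.reachable, (skeleton_adj.mp (deleteEdges_adj.mp huw).1).1⟩
  refine ⟨⟨b, mem_side_self⟩, fun x hx y hy => ?_⟩
  exact (Relation.ReflTransGen.mono (fun _ _ => AdjOn.symm) _ _
    (Relation.ReflTransGen.swap _ _ (hfrom x hx))).trans (hfrom y hy)

theorem elementary_side (hT : (skeleton ends).IsTree) (hab : (skeleton ends).Adj a b) :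
    Elementary ends ((skeleton ends).side a b) :=
  ⟨⟨b, mem_side_self⟩, ⟨a, hT.isAcyclic.notMem_side hab⟩, connectedOn_side,
    hT.compl_side hab ▸ connectedOn_side⟩

theorem cut_side [Fintype V] (hinj : Set.InjOn ends {e | ¬ (ends e).IsDiag})
    (hT : (skeleton ends).IsTree) (hab : (skeleton ends).Adj a b) :
    cut ends ((skeleton ends).side a b) = 1 := by
  rw [cut_eq_card_edgeBoundary hinj, hT.edgeBoundary_side hab, card_singleton]

section StableDegree

variable [Fintype V] {φ : V → ℝ} {g : ℤ}

variable (ends φ) in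
noncomputable def sideSum (a b : V) : ℝ := ∑ᶠ v ∈ (skeleton ends).side a b, φ v

theorem abs_sub_round_sideSum_lt_half (hT : (skeleton ends).IsTree)
    (hinj : Set.InjOn ends {e | ¬ (ends e).IsDiag}) (hnd : Nondegenerate ends φ)
    (hab : (skeleton ends).Adj a b) :
    |sideSum ends φ a b - round (sideSum ends φ a b)| < 1 / 2 :=
  abs_sub_round_lt_half fun n hn => hnd _ (elementary_side hT hab) n (by
    rw [ell, cut_side hinj hT hab, ← sideSum, hn]
    push_cast
    ring)

theorem sideSum_add_sideSum (hT : (skeleton ends).IsTree) (hφ : ∑ v, φ v = (g : ℝ) - 1)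
    (hab : (skeleton ends).Adj a b) : sideSum ends φ a b + sideSum ends φ b a = (g : ℝ) - 1 :=
  (hT.finsum_side_add_finsum_side hab φ).trans hφ

theorem round_sideSum_swap (hT : (skeleton ends).IsTree)
    (hinj : Set.InjOn ends {e | ¬ (ends e).IsDiag}) (hnd : Nondegenerate ends φ)
    (hφ : ∑ v, φ v = (g : ℝ) - 1) (hab : (skeleton ends).Adj a b) :
    round (sideSum ends φ b a) = g - 1 - round (sideSum ends φ a b) := by
  rw [eq_sub_of_add_eq' (sideSum_add_sideSum hT hφ hab)]
  exact_mod_cast round_intCast_sub (g - 1) (abs_sub_round_sideSum_lt_half hT hinj hnd hab)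

-- Stability on the side of `b` at an edge `vb`, which has `cut = 1`, forces the degree there to be
-- the rounding of `sideSum ends φ v b`; these sides partition `V ∖ {v}`.
variable (ends φ g) in
noncomputable def stableDegree (v : V) : ℤ :=
  g - 1 - ∑ b ∈ (skeleton ends).neighborFinset v, round (sideSum ends φ v b)

theorem stableDegree_sub (hT : (skeleton ends).IsTree) (hφ : ∑ v, φ v = (g : ℝ) - 1) (v : V) :
    (stableDegree ends φ g v : ℝ) - φ v
      = ∑ b ∈ (skeleton ends).neighborFinset v,
          (sideSum ends φ v b - round (sideSum ends φ v b)) := by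
  have := hT.sum_sum_side_add v φ
  simp only [stableDegree, sideSum, sum_sub_distrib] at this ⊢
  push_cast
  linarith

theorem finsum_stableDegree_sub (hT : (skeleton ends).IsTree)
    (hinj : Set.InjOn ends {e | ¬ (ends e).IsDiag}) (hnd : Nondegenerate ends φ)
    (hφ : ∑ v, φ v = (g : ℝ) - 1) (S : Set V) :
    ∑ᶠ v ∈ S, (stableDegree ends φ g v : ℝ) - ∑ᶠ v ∈ S, φ v
      = ∑ p ∈ (skeleton ends).edgeBoundary S,
          (sideSum ends φ p.1 p.2 - round (sideSum ends φ p.1 p.2)) := by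
  rw [← finsum_mem_sub_distrib _ _ (Set.toFinite S),
    finsum_mem_congr rfl fun v _ => stableDegree_sub hT hφ v]
  refine sum_sum_neighborFinset_eq_sum_edgeBoundary _ (fun a b hab => ?_) S
  have h1 := sideSum_add_sideSum hT hφ hab
  have h2 := round_sideSum_swap hT hinj hnd hφ hab
  push_cast [h2]
  linarith

theorem sum_stableDegree (hT : (skeleton ends).IsTree)
    (hinj : Set.InjOn ends {e | ¬ (ends e).IsDiag}) (hnd : Nondegenerate ends φ)
    (hφ : ∑ v, φ v = (g : ℝ) - 1) : ∑ v, stableDegree ends φ g v = g - 1 := by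
  have h := finsum_stableDegree_sub hT hinj hnd hφ Set.univ
  rw [finsum_mem_univ, finsum_mem_univ, finsum_eq_sum_of_fintype, finsum_eq_sum_of_fintype] at h
  have : (skeleton ends).edgeBoundary Set.univ = ∅ := by ext; simp
  rw [this, sum_empty, sub_eq_zero, hφ] at h
  exact_mod_cast h

theorem abs_finsum_stableDegree_sub_lt (hT : (skeleton ends).IsTree)
    (hinj : Set.InjOn ends {e | ¬ (ends e).IsDiag}) (hnd : Nondegenerate ends φ)
    (hφ : ∑ v, φ v = (g : ℝ) - 1) {S : Set V} (hS : S.Nonempty) (hS' : S ≠ Set.univ) :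
    |∑ᶠ v ∈ S, (stableDegree ends φ g v : ℝ) - ∑ᶠ v ∈ S, φ v|
      < (cut ends S : ℝ) / 2 := by
  rw [finsum_stableDegree_sub hT hinj hnd hφ, cut_eq_card_edgeBoundary hinj]
  calc _ ≤ ∑ p ∈ (skeleton ends).edgeBoundary S,
          |sideSum ends φ p.1 p.2 - round (sideSum ends φ p.1 p.2)| := abs_sum_le_sum_abs _ _
    _ < ∑ p ∈ (skeleton ends).edgeBoundary S, (1 / 2 : ℝ) :=
        sum_lt_sum_of_nonempty (hT.connected.preconnected.edgeBoundary_nonempty hS hS')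
          fun p hp => abs_sub_round_sideSum_lt_half hT hinj hnd (mem_edgeBoundary.mp hp).1
    _ = _ := by rw [sum_const, nsmul_eq_mul]; ring

theorem eq_stableDegree (hT : (skeleton ends).IsTree)
    (hinj : Set.InjOn ends {e | ¬ (ends e).IsDiag}) {d : V → ℤ} (hsum : ∑ v, d v = g - 1)
    (hstable : ∀ S : Set V, S.Nonempty → S ≠ Set.univ →
      |∑ᶠ v ∈ S, (d v : ℝ) - ∑ᶠ v ∈ S, φ v| < (cut ends S : ℝ) / 2) :
    d = stableDegree ends φ g := by
  have hside : ∀ a b, (skeleton ends).Adj a b →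
      ∑ᶠ v ∈ (skeleton ends).side a b, d v = round (sideSum ends φ a b) := by
    intro a b hab
    have h := hstable _ ⟨b, mem_side_self⟩
      fun h => hT.isAcyclic.notMem_side hab (h ▸ Set.mem_univ a)
    rw [cut_side hinj hT hab, ← Int.cast_finsum_mem (Set.toFinite _)] at h
    refine (round_eq_of_abs_sub_lt_half ?_).symm
    rw [abs_sub_comm]
    simpa [sideSum] using h
  funext v
  have := hT.sum_sum_side_add v d
  rw [stableDegree, ← hsum, ← this,
    sum_congr rfl fun b hb => hside v b ((mem_neighborFinset _ _ _).mp hb)]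
  ring

end StableDegree

/-- For a multigraph of loop-free circuit rank 0 and a nondegenerate
`φ ∈ V(Γ)`, there exists a unique `dd : V → ℤ` with `Σ dd = g − 1` such that
`|Σ_{v∈S} dd v − Σ_{v∈S} φ v| < cut(S)/2` for every nonempty proper `S ⊊ V`
(a `φ`-stable multidegree of a line bundle). -/
theorem statement5 (V E : Type) [Fintype V] (ends : E → Sym2 V)
    (hrk : RankZero ends) (g : ℤ)
    (φ : V → ℝ) (hφ : (∑ v, φ v) = (g : ℝ) - 1)
    (hnd : Nondegenerate ends φ) :
    ∃! dd : V → ℤ, (∑ v, dd v) = g - 1 ∧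
      ∀ S : Set V, S.Nonempty → S ≠ Set.univ →
        |(∑ᶠ v ∈ S, (dd v : ℝ)) - ∑ᶠ v ∈ S, φ v| < (cut ends S : ℝ) / 2 := by
  obtain ⟨hT, hinj⟩ := hrk.isTree_skeleton_and_injOn
  exact ⟨stableDegree ends φ g, ⟨sum_stableDegree hT hinj hnd hφ,
    fun S hS hS' => abs_finsum_stableDegree_sub_lt hT hinj hnd hφ hS hS'⟩,
    fun d hd => eq_stableDegree hT hinj hd.1 hd.2⟩

end ThetaPaper
end

section
/- Let Γ be a connected multigraph, g an integer, and φ0 ∈ V(Γ) nondegenerate. Then the stability polytope of V(Γ) containing φ0 (the connected component of the complement of the union of the stability hyperplanes that contains φ0) is exactly the set {φ ∈ V(Γ) : ℓ(S,d)(φ) > 0 for every elementary S ⊊ V and every d ∈ ℤ such that ℓ(S,d)(φ0) > 0}. -/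
/-!
Each function `ℓ(S,d)` is affine, so the set on the right is convex, hence preconnected; and
since `ℓ(S,d)` is continuous and nonvanishing on the nondegenerate locus, it has constant sign
on the component of `φ0`, which gives one inclusion. For the other, the identity
`ℓ(Sᶜ, g-1-cut(S)-d) = -ℓ(S,d)` on `V(Γ)` shows that a stability hyperplane separating `φ0`
from `φ` can always be read with `φ0` on its positive side, so the right-hand set contains no
degenerate point.
-/

namespace ThetaPaper

section Topology

variable {X : Type*} [TopologicalSpace X]

lemma pos_of_mem_connectedComponentIn {s : Set X} {f : X → ℝ} (hf : ContinuousOn f s)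
    (hs : ∀ y ∈ s, f y ≠ 0) {x y : X} (hx : 0 < f x) (hy : y ∈ connectedComponentIn s x) :
    0 < f y := by
  by_contra! hfy
  have hxs : x ∈ s := connectedComponentIn_nonempty_iff.mp ⟨y, hy⟩
  obtain ⟨z, hz, hfz⟩ := isPreconnected_connectedComponentIn.intermediate_value hy
    (mem_connectedComponentIn hxs) (hf.mono (connectedComponentIn_subset _ _)) ⟨hfy, hx.le⟩
  exact hs z (connectedComponentIn_subset _ _ hz) hfz

end Topology

section Stability

variable {V E : Type} (ends : E → Sym2 V)

lemma cut_compl (S : Set V) : cut ends Sᶜ = cut ends S := by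
  refine Nat.card_congr (Equiv.subtypeEquivRight fun e => ?_)
  constructor <;>
  · rintro ⟨a, b, h, ha, hb⟩
    exact ⟨b, a, h.trans Sym2.eq_swap, by simpa using hb, by simpa using ha⟩

lemma Elementary.compl {S : Set V} (h : Elementary ends S) : Elementary ends Sᶜ := by
  obtain ⟨hS, hSc, hconnS, hconnSc⟩ := h
  exact ⟨hSc, by simpa using hS, hconnSc, by simpa using hconnS⟩

lemma isLinearMap_finsum_mem [Finite V] (S : Set V) :
    IsLinearMap ℝ (fun φ : V → ℝ => ∑ᶠ v ∈ S, φ v) where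
  map_add _ _ := finsum_mem_add_distrib S.toFinite
  map_smul _ _ := by simp only [Pi.smul_apply]; exact (smul_finsum_mem S.toFinite).symm

lemma continuous_ell [Finite V] (S : Set V) (d : ℤ) : Continuous (ell ends S d) :=
  (continuous_const.sub
    ((isLinearMap_finsum_mem S).mk'.continuous_of_finiteDimensional)).add continuous_const

lemma convex_setOf_ell_pos [Finite V] (S : Set V) (d : ℤ) :
    Convex ℝ {φ | 0 < ell ends S d φ} := by
  have hset : {φ | 0 < ell ends S d φ} = {φ | ∑ᶠ v ∈ S, φ v < (d : ℝ) + cut ends S / 2} := by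
    ext φ
    simp only [ell, Set.mem_ofPred_eq]
    constructor <;> intro h <;> linarith
  rw [hset]
  exact convex_halfSpace_lt (isLinearMap_finsum_mem S) _

variable [Fintype V]

lemma finsum_mem_compl (S : Set V) (φ : V → ℝ) :
    ∑ᶠ v ∈ Sᶜ, φ v = (∑ v, φ v) - ∑ᶠ v ∈ S, φ v := by
  rw [eq_sub_iff_add_eq, ← finsum_mem_union disjoint_compl_left Sᶜ.toFinite S.toFinite,
    Set.compl_union_self, finsum_mem_univ, finsum_eq_sum_of_fintype]

lemma isLinearMap_sum : IsLinearMap ℝ (fun φ : V → ℝ => ∑ v, φ v) where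
  map_add _ _ := Finset.sum_add_distrib
  map_smul _ _ := (Finset.mul_sum _ _ _).symm

lemma ell_compl {g : ℤ} {φ : V → ℝ} (hφ : ∑ v, φ v = (g : ℝ) - 1) (S : Set V) (d : ℤ) :
    ell ends Sᶜ (g - 1 - cut ends S - d) φ = -ell ends S d φ := by
  simp only [ell, finsum_mem_compl, cut_compl, hφ]
  push_cast
  ring

def sameSide (g : ℤ) (φ0 : V → ℝ) : Set (V → ℝ) :=
  {φ | (∑ v, φ v) = (g : ℝ) - 1 ∧
    ∀ (S : Set V) (d : ℤ), Elementary ends S → 0 < ell ends S d φ0 → 0 < ell ends S d φ}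

lemma convex_sameSide (g : ℤ) (φ0 : V → ℝ) : Convex ℝ (sameSide ends g φ0) := by
  have hset : sameSide ends g φ0 = {φ | ∑ v, φ v = (g : ℝ) - 1} ∩
      ⋂ (S : Set V) (d : ℤ) (_ : Elementary ends S) (_ : 0 < ell ends S d φ0),
        {φ | 0 < ell ends S d φ} := by
    ext φ
    simp only [sameSide, Set.mem_ofPred_eq, Set.mem_inter_iff, Set.mem_iInter]
  rw [hset]
  exact (convex_hyperplane isLinearMap_sum _).inter <| convex_iInter fun S =>
    convex_iInter fun d => convex_iInter fun _ => convex_iInter fun _ =>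
      convex_setOf_ell_pos ends S d

lemma sameSide_subset_omegaSet {g : ℤ} {φ0 : V → ℝ} (hφ0 : ∑ v, φ0 v = (g : ℝ) - 1)
    (hnd : Nondegenerate ends φ0) : sameSide ends g φ0 ⊆ OmegaSet ends g := by
  rintro φ ⟨hφ, hside⟩
  refine ⟨hφ, fun S hS d hzero => ?_⟩
  rcases (hnd S hS d).lt_or_gt with hneg | hpos
  · have hcompl := hside _ _ hS.compl (by rw [ell_compl ends hφ0]; linarith)
    rw [ell_compl ends hφ] at hcompl
    linarith
  · exact (hside S d hS hpos).ne' hzero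

end Stability

theorem statement7_general (V E : Type) [Fintype V] (ends : E → Sym2 V)
    (g : ℤ)
    (φ0 : V → ℝ) (hφ0 : (∑ v, φ0 v) = (g : ℝ) - 1)
    (hnd : Nondegenerate ends φ0) :
    connectedComponentIn (OmegaSet ends ((g : ℝ))) φ0 =
      {φ : V → ℝ | (∑ v, φ v) = (g : ℝ) - 1 ∧
        ∀ (S : Set V) (d : ℤ), Elementary ends S →
          0 < ell ends S d φ0 → 0 < ell ends S d φ} := by
  change _ = sameSide ends g φ0
  apply subset_antisymm
  · exact fun φ hφ => ⟨(connectedComponentIn_subset _ _ hφ).1, fun S d hS hpos =>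
      pos_of_mem_connectedComponentIn (continuous_ell ends S d).continuousOn
        (fun ψ hψ => hψ.2 S hS d) hpos hφ⟩
  · exact (convex_sameSide ends g φ0).isPreconnected.subset_connectedComponentIn
      ⟨hφ0, fun _ _ _ h => h⟩ (sameSide_subset_omegaSet ends hφ0 hnd)

/-- For a connected multigraph `Γ` and a nondegenerate `φ0 ∈ V(Γ)`,
the stability polytope containing `φ0` (the connected component of the complement of
the union of the stability hyperplanes containing `φ0`) equals
`{φ ∈ V(Γ) : ℓ(S,d)(φ) > 0 for every elementary S and d ∈ ℤ with ℓ(S,d)(φ0) > 0}`. -/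
theorem statement7 (V E : Type) [Fintype V] (ends : E → Sym2 V)
    (hconn : GraphConnected ends) (g : ℤ)
    (φ0 : V → ℝ) (hφ0 : (∑ v, φ0 v) = (g : ℝ) - 1)
    (hnd : Nondegenerate ends φ0) :
    connectedComponentIn (OmegaSet ends ((g : ℝ))) φ0 =
      {φ : V → ℝ | (∑ v, φ v) = (g : ℝ) - 1 ∧
        ∀ (S : Set V) (d : ℤ), Elementary ends S →
          0 < ell ends S d φ0 → 0 < ell ends S d φ} :=
  statement7_general V E ends g φ0 hφ0 hnd

end ThetaPaper
end

section
/- Let (W_{g,n})_ℤ be the group (under pointwise addition) of tuples ψ = (ψ(Γ)), indexed by isomorphism classes of stable n-marked genus-g graphs Γ of loop-free circuit rank 0, where each ψ(Γ): Vert(Γ) → ℤ has Σ_v ψ(Γ)(v) = 0 and ψ(Γ2)(v2) = Σ_{v1: c(v1)=v2} ψ(Γ1)(v1) for every contraction c: Γ1 → Γ2 and every vertex v2 of Γ2. Then the translation action of (W_{g,n})_ℤ on V_{g,n}, given by (ψ + φ)(Γ) = ψ(Γ) + φ(Γ), maps every stability polytope of V_{g,n} onto a stability polytope of V_{g,n}.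 -/
namespace ThetaPaper

/-- An `n`-marked graph (of would-be genus `g`): a multigraph with vertex set
`Fin nv`, edge set `Fin ne`, a genus function and a marking function. -/
structure MarkedGraph (g n : ℕ) where
  nv : ℕ
  ne : ℕ
  ends : Fin ne → Sym2 (Fin nv)
  genus : Fin nv → ℕ
  mark : Fin n → Fin nv

/-- The valence of a vertex: the number of edge-ends at `v` (loops counted twice). -/
noncomputable def val {V E : Type} (ends : E → Sym2 V) (v : V) : ℕ :=
  Nat.card {e : E // ends e = s(v, v)} + Nat.card {e : E // v ∈ ends e}

/-- The graph is a stable `n`-marked graph of genus `g`. -/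
def IsStable {g n : ℕ} (Γ : MarkedGraph g n) : Prop :=
  GraphConnected Γ.ends ∧
  (∑ v, Γ.genus v) + Γ.ne + 1 = g + Γ.nv ∧
  ∀ v, Γ.genus v = 0 → 3 ≤ val Γ.ends v + Nat.card {j : Fin n // Γ.mark j = v}

/-- Stable and of loop-free circuit rank 0. -/
def Good {g n : ℕ} (Γ : MarkedGraph g n) : Prop :=
  IsStable Γ ∧ RankZero Γ.ends

/-- The type of stable `n`-marked genus-`g` graphs of loop-free circuit rank 0. -/
def GoodGraph (g n : ℕ) := {Γ : MarkedGraph g n // Good Γ}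

/-- `c` is (the vertex map of) a contraction from `Γ1` to `Γ2`: there is a set `F` of
contracted edges, each lying inside a fiber of `c`, the fibers of `c` are connected by
the edges of `F`, the non-contracted edges correspond bijectively to the edges of `Γ2`
with matching endpoints, genera add up (plus the circuit rank of the contracted piece),
and markings are transported. -/
def IsContraction {g n : ℕ} (Γ1 Γ2 : MarkedGraph g n) (c : Fin Γ1.nv → Fin Γ2.nv) : Prop :=
  (∀ j, Γ2.mark j = c (Γ1.mark j)) ∧
  ∃ (F : Set (Fin Γ1.ne)) (eE : {e : Fin Γ1.ne // e ∉ F} ≃ Fin Γ2.ne),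
    (∀ e : {e : Fin Γ1.ne // e ∉ F}, Γ2.ends (eE e) = Sym2.map c (Γ1.ends e.1)) ∧
    (∀ e ∈ F, ∃ w, ∀ v ∈ Γ1.ends e, c v = w) ∧
    (∀ w, ConnectedOn (fun e : F => Γ1.ends e.1) {v | c v = w}) ∧
    (∀ w, Γ2.genus w + Nat.card {v // c v = w} =
      (∑ v ∈ Finset.univ.filter (fun v => c v = w), Γ1.genus v) +
      Nat.card {e : Fin Γ1.ne // e ∈ F ∧ ∀ v ∈ Γ1.ends e, c v = w} + 1)

/-- The stability space `V_{g,n}`: tuples `φ(Γ)`, indexed by the stable `n`-marked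
genus-`g` graphs of loop-free circuit rank 0, each summing to `g−1` and compatible
with all contractions. -/
def VgnSet (g n : ℕ) : Set (∀ Γ : GoodGraph g n, Fin Γ.1.nv → ℝ) :=
  {φ | (∀ Γ, ∑ v, φ Γ v = (g : ℝ) - 1) ∧
    ∀ (Γ1 Γ2 : GoodGraph g n) (c : Fin Γ1.1.nv → Fin Γ2.1.nv),
      IsContraction Γ1.1 Γ2.1 c →
      ∀ w, φ Γ2 w = ∑ v ∈ Finset.univ.filter (fun v => c v = w), φ Γ1 v}

/-- An admissible pair `(i, S)`: `i ∈ {0,…,g}`, `S ⊆ {1,…,n}` contains the first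
marking, `#S ≥ 2` if `i = 0` and `#S ≤ n−2` if `i = g`. -/
structure AdmissiblePair (g n : ℕ) [NeZero n] where
  i : ℕ
  S : Finset (Fin n)
  hi : i ≤ g
  h1 : (0 : Fin n) ∈ S
  h0 : i = 0 → 2 ≤ S.card
  hg : i = g → S.card + 2 ≤ n

/-- The two-vertex one-edge stable marked graph `Γ(i,S)`: vertex `0` (= `v1`) of
genus `i` carrying the markings in `S`, vertex `1` (= `v2`) of genus `g−i` carrying
the remaining markings. -/
def GammaIS {g n : ℕ} [NeZero n] (p : AdmissiblePair g n) : MarkedGraph g n where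
  nv := 2
  ne := 1
  ends := fun _ => s((0 : Fin 2), (1 : Fin 2))
  genus := ![p.i, g - p.i]
  mark := fun j => if j ∈ p.S then 0 else 1

/-- The locus of nondegenerate elements of `V_{g,n}`. -/
def VgnOmega (g n : ℕ) : Set (∀ Γ : GoodGraph g n, Fin Γ.1.nv → ℝ) :=
  {φ | φ ∈ VgnSet g n ∧ ∀ Γ : GoodGraph g n, Nondegenerate Γ.1.ends (φ Γ)}

/-- `P` is a stability polytope of `V_{g,n}`: a connected component of the complement
in `V_{g,n}` of the union of all its stability hyperplanes. -/
def IsVgnPolytope (g n : ℕ) (P : Set (∀ Γ : GoodGraph g n, Fin Γ.1.nv → ℝ)) : Prop :=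
  ∃ φ0 ∈ VgnOmega g n, P = connectedComponentIn (VgnOmega g n) φ0


/-- The group `(W_{g,n})_ℤ`: integer tuples of sum zero on each graph, compatible
with all contractions. -/
def WgnSet (g n : ℕ) : Set (∀ Γ : GoodGraph g n, Fin Γ.1.nv → ℤ) :=
  {ψ | (∀ Γ, ∑ v, ψ Γ v = 0) ∧
    ∀ (Γ1 Γ2 : GoodGraph g n) (c : Fin Γ1.1.nv → Fin Γ2.1.nv),
      IsContraction Γ1.1 Γ2.1 c →
      ∀ w, ψ Γ2 w = ∑ v ∈ Finset.univ.filter (fun v => c v = w), ψ Γ1 v}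

lemma nondeg_translate {V E : Type} [Fintype V] (ends : E → Sym2 V) (f : V → ℤ)
    (φ : V → ℝ) (h : Nondegenerate ends φ) :
    Nondegenerate ends (fun v => (f v : ℝ) + φ v) := by
  intro S hS d hc
  apply h S hS (d - ∑ v ∈ (Set.toFinite S).toFinset, f v)
  unfold ell at hc ⊢
  rw [finsum_mem_eq_finite_toFinset_sum _ (Set.toFinite S)] at hc ⊢
  push_cast at hc ⊢
  rw [Finset.sum_add_distrib] at hc
  linarith

lemma neg_mem_Wgn {g n : ℕ} (ψ : ∀ Γ : GoodGraph g n, Fin Γ.1.nv → ℤ)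
    (hψ : ψ ∈ WgnSet g n) : -ψ ∈ WgnSet g n := by
  obtain ⟨h1, h2⟩ := hψ
  constructor
  · intro Γ
    simp only [Pi.neg_apply, Finset.sum_neg_distrib, h1 Γ, neg_zero]
  · intro Γ1 Γ2 c hc w
    simp only [Pi.neg_apply, Finset.sum_neg_distrib, h2 Γ1 Γ2 c hc w]

lemma omega_translate {g n : ℕ} (ψ : ∀ Γ : GoodGraph g n, Fin Γ.1.nv → ℤ)
    (hψ : ψ ∈ WgnSet g n) (φ : ∀ Γ : GoodGraph g n, Fin Γ.1.nv → ℝ)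
    (hφ : φ ∈ VgnOmega g n) :
    (fun Γ v => (ψ Γ v : ℝ) + φ Γ v) ∈ VgnOmega g n := by
  obtain ⟨⟨hs, hcom⟩, hnd⟩ := hφ
  obtain ⟨hs', hcom'⟩ := hψ
  refine ⟨⟨?_, ?_⟩, ?_⟩
  · intro Γ
    rw [Finset.sum_add_distrib, hs Γ]
    have : (∑ v, (ψ Γ v : ℝ)) = ((∑ v, ψ Γ v : ℤ) : ℝ) := by push_cast; ring
    rw [this, hs' Γ]
    simp
  · intro Γ1 Γ2 c hc w
    show (ψ Γ2 w : ℝ) + φ Γ2 w = _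
    rw [Finset.sum_add_distrib, hcom Γ1 Γ2 c hc w]
    have : (∑ v ∈ Finset.univ.filter (fun v => c v = w), (ψ Γ1 v : ℝ))
        = ((∑ v ∈ Finset.univ.filter (fun v => c v = w), ψ Γ1 v : ℤ) : ℝ) := by
      push_cast; ring
    rw [this, ← hcom' Γ1 Γ2 c hc w]
  · intro Γ
    exact nondeg_translate Γ.1.ends (ψ Γ) (φ Γ) (hnd Γ)

/-- The translation action of `(W_{g,n})_ℤ` on `V_{g,n}` maps every
stability polytope of `V_{g,n}` onto a stability polytope of `V_{g,n}`. -/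
theorem statement13 (g n : ℕ) [NeZero n] (hg0 : g = 0 → 3 ≤ n)
    (ψ : ∀ Γ : GoodGraph g n, Fin Γ.1.nv → ℤ) (hψ : ψ ∈ WgnSet g n)
    (Q : Set (∀ Γ : GoodGraph g n, Fin Γ.1.nv → ℝ)) (hQ : IsVgnPolytope g n Q) :
    IsVgnPolytope g n
      ((fun φ : ∀ Γ : GoodGraph g n, Fin Γ.1.nv → ℝ =>
          fun Γ v => (ψ Γ v : ℝ) + φ Γ v) '' Q) := by
  classical
  obtain ⟨φ0, hφ0, rfl⟩ := hQ
  have hneg := neg_mem_Wgn ψ hψ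
  refine ⟨(fun Γ v => (ψ Γ v : ℝ) + φ0 Γ v), omega_translate ψ hψ φ0 hφ0, ?_⟩
  set ψ' : ∀ Γ : GoodGraph g n, Fin Γ.1.nv → ℝ := fun Γ v => (ψ Γ v : ℝ) with hψ'
  have hT : (fun φ : ∀ Γ : GoodGraph g n, Fin Γ.1.nv → ℝ =>
      fun Γ v => (ψ Γ v : ℝ) + φ Γ v) = ⇑(Homeomorph.addLeft ψ') := by
    funext φ; rfl
  have hΩ : (Homeomorph.addLeft ψ') '' (VgnOmega g n) = VgnOmega g n := by
    apply Set.Subset.antisymm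
    · rintro _ ⟨φ, hφ, rfl⟩
      exact omega_translate ψ hψ φ hφ
    · intro φ hφ
      refine ⟨(Homeomorph.addLeft ψ').symm φ, ?_, by simp⟩
      have h2 := omega_translate (-ψ) hneg φ hφ
      have heq : (Homeomorph.addLeft ψ').symm φ
          = fun Γ v => (((-ψ) Γ v : ℤ) : ℝ) + φ Γ v := by
        funext Γ v
        show -ψ' Γ v + φ Γ v = _
        simp [hψ']
      rw [heq]; exact h2
  rw [hT]
  have h3 := (Homeomorph.addLeft ψ').image_connectedComponentIn (s := VgnOmega g n) hφ0
  rw [hΩ] at h3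
  rw [h3]
  rfl

end ThetaPaper
end
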